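/- Let A, B be n×n positive definite complex matrices and τ, ν ∈ (0,1) with ν ≤ min{τ,1-τ} or ν ≥ max{τ,1-τ}. Then det(A+B)^{1/n} ≥ det(A#_ν B + A#_{1-ν} B)^{1/n} + (ν(1-ν)/(τ(1-τ))) · det(A + B - (A#_τ B + A#_{1-τ} B))^{1/n}. -/

import Mathlib

open Matrix ComplexOrder

/-- Real power of a matrix, defined via the spectral decomposition when the
matrix is Hermitian (and junk value `0` otherwise). -/
noncomputable def mpow {n : ℕ} (A : Matrix (Fin n) (Fin n) ℂ) (t : ℝ) :
    Matrix (Fin n) (Fin n) ℂ :=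
  if hA : A.IsHermitian then
    (hA.eigenvectorUnitary : Matrix (Fin n) (Fin n) ℂ) *
      Matrix.diagonal (fun i => ((hA.eigenvalues i ^ t : ℝ) : ℂ)) *
      (star hA.eigenvectorUnitary : Matrix (Fin n) (Fin n) ℂ)
  else 0

/-- The weighted matrix geometric mean `A #_t B = A^{1/2} (A^{-1/2} B A^{-1/2})^t A^{1/2}`. -/
noncomputable def geoMean {n : ℕ} (A B : Matrix (Fin n) (Fin n) ℂ) (t : ℝ) :
    Matrix (Fin n) (Fin n) ℂ :=
  mpow A (1/2) * mpow (mpow A (-(1/2)) * B * mpow A (-(1/2))) t * mpow A (1/2)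

/-!
Conjugating by `S = A^{1/2}` writes `A = S 1 S`, `B = S C S` and `A #_t B = S C^t S` with
`C = A^{-1/2} B A^{-1/2}`, so every matrix in the statement has the form `S f(C) S` and its
determinant is `det A * ∏ f(λᵢ)` over the eigenvalues `λᵢ > 0` of `C`. The claim then follows from
superadditivity of the geometric mean, `(∏ aᵢ)^{1/n} + (∏ bᵢ)^{1/n} ≤ (∏ (aᵢ + bᵢ))^{1/n}`, and the
scalar inequality `ν(1-ν)(x^τ-1)(x^{1-τ}-1) ≤ τ(1-τ)(x^ν-1)(x^{1-ν}-1)`. Writing `x = e^{2u}` and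
`s = 1 - 2t`, the latter says that `(cosh u - cosh su) / (1 - s²)` increases with `s²`, which
holds term by term in the Taylor series of `cosh`, since `(1 - s^{2k}) / (1 - s²) = ∑_{j<k} s^{2j}`.
-/

open Real Finset

lemma one_sub_mul_one_sub_pow_le (k : ℕ) {p q : ℝ} (hp : 0 ≤ p) (hpq : p ≤ q) (hq : q ≤ 1) :
    (1 - q) * (1 - p ^ k) ≤ (1 - p) * (1 - q ^ k) := by
  have geom : ∀ r : ℝ, 1 - r ^ k = (1 - r) * ∑ j ∈ range k, r ^ j := fun r => by
    linear_combination geom_sum_mul r k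
  have hsum : ∑ j ∈ range k, p ^ j ≤ ∑ j ∈ range k, q ^ j :=
    sum_le_sum fun j _ => pow_le_pow_left₀ hp hpq j
  rw [geom p, geom q]
  have hpq' : 0 ≤ (1 - p) * (1 - q) := mul_nonneg (by linarith) (by linarith)
  linarith [mul_le_mul_of_nonneg_left hsum hpq']

lemma hasSum_cosh_sub_cosh_mul (u s : ℝ) :
    HasSum (fun k => (u ^ 2) ^ k / (2 * k).factorial * (1 - (s ^ 2) ^ k))
      (cosh u - cosh (s * u)) := by
  refine ((hasSum_cosh u).sub (hasSum_cosh (s * u))).congr_fun fun k => ?_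
  rw [mul_pow, pow_mul, pow_mul]
  ring

lemma cosh_sub_cosh_mul_le (u : ℝ) {s t : ℝ} (hst : s ^ 2 ≤ t ^ 2) (ht : t ^ 2 ≤ 1) :
    (1 - t ^ 2) * (cosh u - cosh (s * u)) ≤ (1 - s ^ 2) * (cosh u - cosh (t * u)) := by
  refine hasSum_le (fun k => ?_) ((hasSum_cosh_sub_cosh_mul u s).mul_left _)
    ((hasSum_cosh_sub_cosh_mul u t).mul_left _)
  have hcoeff : 0 ≤ (u ^ 2) ^ k / (2 * k).factorial := by positivity
  linarith [mul_le_mul_of_nonneg_left (one_sub_mul_one_sub_pow_le k (sq_nonneg s) hst ht) hcoeff]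

noncomputable def heinzGap (t x : ℝ) : ℝ := 1 + x - (x ^ t + x ^ (1 - t))

lemma heinzGap_exp (t u : ℝ) :
    heinzGap t (exp (2 * u)) = 2 * exp u * (cosh u - cosh ((1 - 2 * t) * u)) := by
  simp only [heinzGap, ← exp_mul, cosh_eq]
  have expand : 2 * exp u * ((exp u + exp (-u)) / 2
      - (exp ((1 - 2 * t) * u) + exp (-((1 - 2 * t) * u))) / 2)
      = exp u * exp u + exp u * exp (-u) - exp u * exp ((1 - 2 * t) * u)
        - exp u * exp (-((1 - 2 * t) * u)) := by ring
  rw [expand]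
  simp only [← exp_add, add_neg_cancel, exp_zero]
  ring_nf

lemma heinzGap_nonneg {x t : ℝ} (hx : 0 < x) (ht₀ : 0 ≤ t) (ht₁ : t ≤ 1) : 0 ≤ heinzGap t x := by
  obtain ⟨u, rfl⟩ : ∃ u, x = exp (2 * u) :=
    ⟨log x / 2, by rw [mul_div_cancel₀ _ two_ne_zero, exp_log hx]⟩
  rw [heinzGap_exp]
  refine mul_nonneg (by positivity) (sub_nonneg.2 (cosh_le_cosh.2 ?_))
  rw [abs_mul]
  exact mul_le_of_le_one_left (abs_nonneg u) (abs_le.2 ⟨by linarith, by linarith⟩)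

lemma mul_heinzGap_le {x τ ν : ℝ} (hx : 0 < x) (hν₀ : 0 ≤ ν) (hν₁ : ν ≤ 1)
    (hτν : (1 - 2 * τ) ^ 2 ≤ (1 - 2 * ν) ^ 2) :
    ν * (1 - ν) * heinzGap τ x ≤ τ * (1 - τ) * heinzGap ν x := by
  obtain ⟨u, rfl⟩ : ∃ u, x = exp (2 * u) :=
    ⟨log x / 2, by rw [mul_div_cancel₀ _ two_ne_zero, exp_log hx]⟩
  have key := cosh_sub_cosh_mul_le u hτν (by nlinarith)
  rw [heinzGap_exp, heinzGap_exp]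
  calc ν * (1 - ν) * (2 * exp u * (cosh u - cosh ((1 - 2 * τ) * u)))
      = exp u / 2 * ((1 - (1 - 2 * ν) ^ 2) * (cosh u - cosh ((1 - 2 * τ) * u))) := by ring
    _ ≤ exp u / 2 * ((1 - (1 - 2 * τ) ^ 2) * (cosh u - cosh ((1 - 2 * ν) * u))) :=
      mul_le_mul_of_nonneg_left key (by positivity)
    _ = τ * (1 - τ) * (2 * exp u * (cosh u - cosh ((1 - 2 * ν) * u))) := by ring

lemma div_mul_heinzGap_le {x τ ν : ℝ} (hx : 0 < x) (hτ₀ : 0 < τ) (hτ₁ : τ < 1) (hν₀ : 0 ≤ ν)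
    (hν₁ : ν ≤ 1) (hτν : (1 - 2 * τ) ^ 2 ≤ (1 - 2 * ν) ^ 2) :
    ν * (1 - ν) / (τ * (1 - τ)) * heinzGap τ x ≤ heinzGap ν x := by
  rw [div_mul_eq_mul_div, div_le_iff₀' (by nlinarith)]
  exact mul_heinzGap_le hx hν₀ hν₁ hτν

section GeomMean

variable {ι : Type*} [Fintype ι] [Nonempty ι]

lemma prod_rpow_add_prod_rpow_le {a b : ι → ℝ} (ha : ∀ i, 0 ≤ a i) (hb : ∀ i, 0 ≤ b i) :
    (∏ i, a i) ^ (1 / Fintype.card ι : ℝ) + (∏ i, b i) ^ (1 / Fintype.card ι : ℝ)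
      ≤ (∏ i, (a i + b i)) ^ (1 / Fintype.card ι : ℝ) := by
  set p : ℝ := 1 / Fintype.card ι
  have hp : 0 < p := by positivity
  have hab : ∀ i, 0 ≤ a i + b i := fun i => add_nonneg (ha i) (hb i)
  by_cases! hz : ∃ i, a i + b i = 0
  · obtain ⟨i, hi⟩ := hz
    rw [prod_eq_zero (mem_univ i) (by linarith [ha i, hb i] : a i = 0),
      prod_eq_zero (mem_univ i) (by linarith [ha i, hb i] : b i = 0), zero_rpow hp.ne', add_zero]
    exact rpow_nonneg (prod_nonneg fun i _ => hab i) p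
  -- AM-GM applied to the ratios `f i / (a i + b i)`
  have amgm : ∀ f : ι → ℝ, (∀ i, 0 ≤ f i) →
      (∏ i, f i) ^ p ≤ (∏ i, (a i + b i)) ^ p * ∑ i, p * (f i / (a i + b i)) := by
    intro f hf
    have hratio : ∀ i, 0 ≤ f i / (a i + b i) := fun i => div_nonneg (hf i) (hab i)
    have hf_eq : ∏ i, f i = (∏ i, (a i + b i)) * ∏ i, (f i / (a i + b i)) := by
      rw [← prod_mul_distrib]
      exact prod_congr rfl fun i _ => (mul_div_cancel₀ _ (hz i)).symm
    rw [hf_eq, mul_rpow (prod_nonneg fun i _ => hab i) (prod_nonneg fun i _ => hratio i),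
      ← finsetProd_rpow _ _ fun i _ => hratio i]
    refine mul_le_mul_of_nonneg_left ?_ (rpow_nonneg (prod_nonneg fun i _ => hab i) p)
    refine geom_mean_le_arith_mean_weighted _ _ _ (fun _ _ => hp.le) ?_ fun i _ => hratio i
    simp [p]
  calc (∏ i, a i) ^ p + (∏ i, b i) ^ p
      ≤ (∏ i, (a i + b i)) ^ p * ∑ i, p * (a i / (a i + b i))
        + (∏ i, (a i + b i)) ^ p * ∑ i, p * (b i / (a i + b i)) :=
        add_le_add (amgm a ha) (amgm b hb)
    _ = (∏ i, (a i + b i)) ^ p * ∑ _i : ι, p := by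
      rw [← mul_add, ← sum_add_distrib]
      congr 1
      exact sum_congr rfl fun i _ => by rw [← mul_add, ← add_div, div_self (hz i), mul_one]
    _ = (∏ i, (a i + b i)) ^ p := by simp [p]

lemma mul_prod_rpow_add_mul_le {a b e : ι → ℝ} {c d : ℝ} (hc : 0 ≤ c) (hd : 0 ≤ d)
    (ha : ∀ i, 0 ≤ a i) (hb : ∀ i, 0 ≤ b i) (hle : ∀ i, a i + c * b i ≤ e i) :
    (d * ∏ i, a i) ^ (1 / Fintype.card ι : ℝ) + c * (d * ∏ i, b i) ^ (1 / Fintype.card ι : ℝ)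
      ≤ (d * ∏ i, e i) ^ (1 / Fintype.card ι : ℝ) := by
  set p : ℝ := 1 / Fintype.card ι
  have hcb : ∀ i, 0 ≤ c * b i := fun i => mul_nonneg hc (hb i)
  have hc_pull : c * (∏ i, b i) ^ p = (∏ i, c * b i) ^ p := by
    rw [prod_mul_distrib, prod_const, card_univ,
      mul_rpow (by positivity) (prod_nonneg fun i _ => hb i), ← rpow_natCast, ← rpow_mul hc,
      mul_one_div_cancel (by positivity), rpow_one]
  rw [mul_rpow hd (prod_nonneg fun i _ => ha i), mul_rpow hd (prod_nonneg fun i _ => hb i),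
    mul_rpow hd (prod_nonneg fun i _ => (add_nonneg (ha i) (hcb i)).trans (hle i)),
    mul_left_comm, ← mul_add, hc_pull]
  refine mul_le_mul_of_nonneg_left ((prod_rpow_add_prod_rpow_le ha hcb).trans ?_) (by positivity)
  exact rpow_le_rpow (prod_nonneg fun i _ => add_nonneg (ha i) (hcb i))
    (prod_le_prod (fun i _ => add_nonneg (ha i) (hcb i)) fun i _ => hle i) (by positivity)

end GeomMean

namespace Matrix

variable {ι 𝕜 : Type*} [Fintype ι] [DecidableEq ι] [RCLike 𝕜] {A : Matrix ι ι 𝕜}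

lemma IsHermitian.det_cfc (hA : A.IsHermitian) (f : ℝ → ℝ) :
    (cfc f A).det = ∏ i, (f (hA.eigenvalues i) : 𝕜) := by
  simp [hA.cfc_eq, IsHermitian.cfc, -Unitary.conjStarAlgAut_apply]

lemma PosDef.spectrum_pos (hA : A.PosDef) {x : ℝ} (hx : x ∈ spectrum ℝ A) : 0 < x := by
  obtain ⟨i, rfl⟩ := hA.1.spectrum_real_eq_range_eigenvalues ▸ hx
  exact hA.eigenvalues_pos i

end Matrix

section mpow
variable {n : ℕ} {A : Matrix (Fin n) (Fin n) ℂ}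

lemma mpow_eq_cfc (hA : A.IsHermitian) (t : ℝ) : mpow A t = cfc (fun x : ℝ => x ^ t) A := by
  rw [hA.cfc_eq, IsHermitian.cfc, Unitary.conjStarAlgAut_apply, mpow, dif_pos hA]
  rfl

lemma isHermitian_mpow (hA : A.IsHermitian) (t : ℝ) : (mpow A t).IsHermitian := by
  rw [mpow_eq_cfc hA]
  exact cfc_predicate _ A

lemma mpow_mul_mpow (hA : A.PosDef) (s t : ℝ) : mpow A s * mpow A t = mpow A (s + t) := by
  simp only [mpow_eq_cfc hA.1]
  rw [← cfc_mul _ _ A (A.finite_real_spectrum.continuousOn _)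
    (A.finite_real_spectrum.continuousOn _)]
  exact cfc_congr fun x hx => (Real.rpow_add (hA.spectrum_pos hx) s t).symm

lemma mpow_zero (hA : A.IsHermitian) : mpow A 0 = 1 := by
  simpa only [mpow_eq_cfc hA, Real.rpow_zero] using cfc_const_one ℝ A hA.isSelfAdjoint

lemma mpow_one (hA : A.IsHermitian) : mpow A 1 = A := by
  simpa only [mpow_eq_cfc hA, Real.rpow_one] using cfc_id' ℝ A hA.isSelfAdjoint

end mpow

lemma re_det_mul_cfc_mul {ι : Type*} [Fintype ι] [DecidableEq ι] {A S X : Matrix ι ι ℂ}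
    (hSS : S * S = A) (hX : X.IsHermitian) (f : ℝ → ℝ) :
    (S * cfc f X * S).det.re = A.det.re * ∏ i, f (hX.eigenvalues i) := by
  rw [det_mul, det_mul, hX.det_cfc, ← hSS, det_mul, mul_right_comm, ← RCLike.ofReal_prod]
  exact Complex.re_mul_ofReal _ _

lemma exists_geoMean_eq_mul_cfc_mul {n : ℕ} {A B : Matrix (Fin n) (Fin n) ℂ} (hA : A.PosDef)
    (hB : B.PosDef) :
    ∃ S C : Matrix (Fin n) (Fin n) ℂ, S * S = A ∧ S * C * S = B ∧ C.PosDef ∧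
      ∀ t : ℝ, geoMean A B t = S * cfc (fun x : ℝ => x ^ t) C * S := by
  set S := mpow A (1 / 2)
  set T := mpow A (-(1 / 2))
  have hST : S * T = 1 := by rw [mpow_mul_mpow hA, add_neg_cancel, mpow_zero hA.1]
  have hTS : T * S = 1 := by rw [mpow_mul_mpow hA, neg_add_cancel, mpow_zero hA.1]
  have hT : IsUnit T := IsUnit.of_mul_eq_one S hTS
  have hC : (T * B * T).PosDef := by
    have := hB.conjTranspose_mul_mul_same (mulVec_injective_iff_isUnit.mpr hT)
    rwa [(isHermitian_mpow hA.1 _).eq] at this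
  refine ⟨S, T * B * T, ?_, ?_, hC, fun t => ?_⟩
  · rw [mpow_mul_mpow hA, add_halves, mpow_one hA.1]
  · rw [← mul_assoc, ← mul_assoc, hST, one_mul, mul_assoc, hTS, mul_one]
  · rw [geoMean, mpow_eq_cfc hC.1]

theorem determinant_quadratic_heinz {n : ℕ} (hn : 0 < n)
    (A B : Matrix (Fin n) (Fin n) ℂ) (hA : A.PosDef) (hB : B.PosDef)
    (τ ν : ℝ) (hτ : τ ∈ Set.Ioo (0:ℝ) 1) (hν : ν ∈ Set.Ioo (0:ℝ) 1)
    (h : ν ≤ min τ (1 - τ) ∨ max τ (1 - τ) ≤ ν) :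
    ((geoMean A B ν + geoMean A B (1 - ν)).det.re) ^ ((1:ℝ)/n)
      + (ν * (1 - ν) / (τ * (1 - τ))) *
        ((A + B - (geoMean A B τ + geoMean A B (1 - τ))).det.re) ^ ((1:ℝ)/n)
      ≤ ((A + B).det.re) ^ ((1:ℝ)/n) := by
  obtain ⟨S, C, hSS, hSCS, hC, hgeo⟩ := exists_geoMean_eq_mul_cfc_mul hA hB
  have hcont (f : ℝ → ℝ) : ContinuousOn f (spectrum ℝ C) := C.finite_real_spectrum.continuousOn f
  have hsum : A + B = S * cfc (fun x : ℝ => 1 + x) C * S := by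
    rw [cfc_add (a := C) _ _ (hcont _) (hcont _), cfc_const_one ℝ C hC.1.isSelfAdjoint,
      cfc_id' ℝ C hC.1.isSelfAdjoint, mul_add, add_mul, mul_one, hSS, hSCS]
  have hmean (t : ℝ) : geoMean A B t + geoMean A B (1 - t)
      = S * cfc (fun x : ℝ => x ^ t + x ^ (1 - t)) C * S := by
    rw [hgeo, hgeo, ← add_mul, ← mul_add, cfc_add (a := C) _ _ (hcont _) (hcont _)]
  have hgap : A + B - (geoMean A B τ + geoMean A B (1 - τ)) = S * cfc (heinzGap τ) C * S := by
    rw [hsum, hmean, ← sub_mul, ← mul_sub, ← cfc_sub _ _ C (hcont _) (hcont _)]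
    rfl
  have hτν : (1 - 2 * τ) ^ 2 ≤ (1 - 2 * ν) ^ 2 := by
    rcases h with h | h <;> simp only [le_min_iff, max_le_iff] at h <;> nlinarith
  have hpos := hC.eigenvalues_pos
  have : Nonempty (Fin n) := Fin.pos_iff_nonempty.mp hn
  rw [hmean, hgap, hsum, re_det_mul_cfc_mul hSS hC.1, re_det_mul_cfc_mul hSS hC.1,
    re_det_mul_cfc_mul hSS hC.1]
  simpa only [Fintype.card_fin] using mul_prod_rpow_add_mul_le
    (div_nonneg (by nlinarith [hν.1, hν.2]) (by nlinarith [hτ.1, hτ.2]))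
    (Complex.pos_iff.mp hA.det_pos).1.le
    (fun i => add_nonneg (Real.rpow_nonneg (hpos i).le _) (Real.rpow_nonneg (hpos i).le _))
    (fun i => heinzGap_nonneg (hpos i) hτ.1.le hτ.2.le)
    (fun i => by
      have := div_mul_heinzGap_le (hpos i) hτ.1 hτ.2 hν.1.le hν.2.le hτν
      unfold heinzGap at this ⊢
      linarith)
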